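/- Gradient formula for the forward–backward envelope with convex g: let g : E → ℝ ∪ {+∞} be proper, convex and lower semicontinuous, so that prox_{γg} : E → E is single-valued, and let γ > 0. If ℓ is differentiable with L-Lipschitz gradient and is twice differentiable at u ∈ E with second derivative (Hessian) ∇²ℓ(u), then φ_γ is differentiable at u and ∇φ_γ(u) = (Id − γ∇²ℓ(u)) R_γ(u), where R_γ(u) := (u − prox_{γg}(u − γ∇ℓ(u)))/γ is the fixed-point residual. -/

import Mathlib

open scoped RealInnerProductSpace
open Filter Topology Asymptotics

/-- Moreau envelope `g^γ(v) = inf_w { g(w) + (1/(2γ))‖w − v‖² }` of an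
extended-real-valued function `g`. -/
noncomputable def moreauEnv {E : Type*} [NormedAddCommGroup E] [InnerProductSpace ℝ E]
    (g : E → EReal) (γ : ℝ) (v : E) : EReal :=
  ⨅ w : E, g w + (((1 / (2 * γ)) * ‖w - v‖ ^ 2 : ℝ) : EReal)

/-- The (set-valued) proximal mapping
`prox_{γg}(v) = argmin_w { g(w) + (1/(2γ))‖w − v‖² }`. -/
def proxSet {E : Type*} [NormedAddCommGroup E] [InnerProductSpace ℝ E]
    (g : E → EReal) (γ : ℝ) (v : E) : Set E :=
  {w | ∀ w' : E, g w + (((1 / (2 * γ)) * ‖w - v‖ ^ 2 : ℝ) : EReal)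
      ≤ g w' + (((1 / (2 * γ)) * ‖w' - v‖ ^ 2 : ℝ) : EReal)}

/-- The forward–backward envelope
`φ_γ(u) = ℓ(u) − (γ/2)‖∇ℓ(u)‖² + g^γ(u − γ∇ℓ(u))`, where `l'` plays the role
of the gradient `∇ℓ`. -/
noncomputable def fbe {E : Type*} [NormedAddCommGroup E] [InnerProductSpace ℝ E]
    (l : E → ℝ) (l' : E → E) (g : E → EReal) (γ : ℝ) (u : E) : EReal :=
  ((l u - (γ / 2) * ‖l' u‖ ^ 2 : ℝ) : EReal) + moreauEnv g γ (u - γ • l' u)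

/-!
Minimality of `prox_{γg}(v)` alone gives the Moreau envelope a quadratic upper model
`g^γ(v') ≤ g^γ(v) + ⟪(v - prox v)/γ, v' - v⟫ + ‖v' - v‖²/(2γ)` at every `v`. Exchanging `v` and
`v'` turns this into a matching lower bound up to `⟪G v' - G v, v' - v⟫`, where `G v = (v - prox v)/γ`,
and convexity of `g` makes `prox` nonexpansive, hence `G` continuous: so `g^γ` is differentiable
with gradient `G`. The FBE is `ℓ - (γ/2)‖∇ℓ‖² + g^γ ∘ (id - γ∇ℓ)`; by the chain rule and the symmetry
of `∇²ℓ(u)` both gradients are `Id - γ∇²ℓ(u)` applied to a vector, namely `∇ℓ(u)` and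
`G(u - γ∇ℓ(u))`, and these add up to `R_γ(u)`.
-/

namespace HasGradientAt

variable {E F : Type*} [NormedAddCommGroup E] [InnerProductSpace ℝ E] [CompleteSpace E]
  [NormedAddCommGroup F] [InnerProductSpace ℝ F] [CompleteSpace F]
  {f h : E → ℝ} {f' h' x : E}

theorem add (hf : HasGradientAt f f' x) (hh : HasGradientAt h h' x) :
    HasGradientAt (fun y => f y + h y) (f' + h') x := by
  rw [hasGradientAt_iff_hasFDerivAt, map_add]
  exact hf.hasFDerivAt.add hh.hasFDerivAt

theorem sub (hf : HasGradientAt f f' x) (hh : HasGradientAt h h' x) :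
    HasGradientAt (fun y => f y - h y) (f' - h') x := by
  rw [hasGradientAt_iff_hasFDerivAt, map_sub]
  exact hf.hasFDerivAt.sub hh.hasFDerivAt

theorem const_mul (c : ℝ) (hf : HasGradientAt f f' x) :
    HasGradientAt (fun y => c * f y) (c • f') x := by
  rw [hasGradientAt_iff_hasFDerivAt, map_smulₛₗ]
  exact hf.hasFDerivAt.const_mul c

theorem comp_hasFDerivAt {φ : F → E} {A : F →L[ℝ] E} {y : F}
    (hf : HasGradientAt f f' (φ y)) (hφ : HasFDerivAt φ A y) :
    HasGradientAt (fun z => f (φ z)) (A.adjoint f') y := by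
  rw [hasGradientAt_iff_hasFDerivAt]
  refine (hf.hasFDerivAt.comp y hφ).congr_fderiv ?_
  ext z
  simp [ContinuousLinearMap.adjoint_inner_left]

end HasGradientAt

theorem hasGradientAt_norm_sq {E : Type*} [NormedAddCommGroup E] [InnerProductSpace ℝ E]
    [CompleteSpace E] (x : E) : HasGradientAt (fun y => ‖y‖ ^ 2) (2 • x) x := by
  rw [hasGradientAt_iff_hasFDerivAt]
  refine (hasStrictFDerivAt_norm_sq x).hasFDerivAt.congr_fderiv ?_
  ext y
  simp

section Smooth

variable {E : Type*} [NormedAddCommGroup E] [InnerProductSpace ℝ E] [CompleteSpace E]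

theorem hasGradientAt_of_le_quadratic {f : E → ℝ} {G : E → E} {c : ℝ} {x : E}
    (hf : ∀ y z, f z ≤ f y + ⟪G y, z - y⟫ + c * ‖z - y‖ ^ 2) (hG : ContinuousAt G x) :
    HasGradientAt f (G x) x := by
  rw [hasGradientAt_iff_isLittleO, isLittleO_iff]
  intro ε hε
  have hρ : Tendsto (fun z => ‖G z - G x‖ + |c| * ‖z - x‖) (𝓝 x) (𝓝 0) := by
    have hGx := tendsto_iff_norm_sub_tendsto_zero.mp hG
    have hx := tendsto_iff_norm_sub_tendsto_zero.mp (tendsto_id (x := 𝓝 x))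
    simpa using hGx.add (hx.const_mul |c|)
  filter_upwards [hρ.eventually (eventually_le_nhds hε)] with z hz
  have hup := hf x z
  -- the model at `z`, read at `x`, bounds the remainder from below
  have hlow := hf z x
  rw [← neg_sub z x, inner_neg_right, norm_neg] at hlow
  have hcs := abs_real_inner_le_norm (G z - G x) (z - x)
  rw [inner_sub_left, abs_le] at hcs
  have hc := le_abs_self c
  have hc' := neg_abs_le c
  have hsq := sq_nonneg ‖z - x‖
  have hbound : |f z - f x - ⟪G x, z - x⟫| ≤ (‖G z - G x‖ + |c| * ‖z - x‖) * ‖z - x‖ := by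
    rw [abs_le]; constructor <;> nlinarith
  rw [Real.norm_eq_abs]
  exact hbound.trans (mul_le_mul_of_nonneg_right hz (norm_nonneg _))

theorem isSymmetric_of_hasFDerivAt_gradient {f : E → ℝ} {f' : E → E} {H : E →L[ℝ] E} {x : E}
    (hf : ∀ y, HasGradientAt f (f' y) y) (hH : HasFDerivAt f' H x) :
    (H : E →ₗ[ℝ] E).IsSymmetric := by
  let D := (InnerProductSpace.toDual ℝ E).toContinuousLinearEquiv.toContinuousLinearMap
  have hD : HasFDerivAt (fun y => D (f' y)) (D.comp H) x := D.hasFDerivAt.comp x hH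
  intro a b
  simpa [D, real_inner_comm] using
    second_derivative_symmetric (fun y => (hf y).hasFDerivAt) hD a b

theorem hasGradientAt_sub_mul_norm_sq_gradient {l : E → ℝ} {l' : E → E} {H : E →L[ℝ] E} {u : E}
    (hgrad : ∀ x, HasGradientAt l (l' x) x) (hH : HasFDerivAt l' H u) (γ : ℝ) :
    HasGradientAt (fun x => l x - γ / 2 * ‖l' x‖ ^ 2)
      ((ContinuousLinearMap.id ℝ E - γ • H) (l' u)) u := by
  convert (hgrad u).sub (((hasGradientAt_norm_sq (l' u)).comp_hasFDerivAt hH).const_mul (γ / 2))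
    using 1
  rw [(isSymmetric_of_hasFDerivAt_gradient hgrad hH).clm_adjoint_eq, map_nsmul, sub_apply,
    smul_apply, ContinuousLinearMap.id_apply]
  module

end Smooth

def ConvexEReal {E : Type*} [AddCommGroup E] [Module ℝ E] (g : E → EReal) : Prop :=
  ∀ x y : E, ∀ t : ℝ, 0 ≤ t → t ≤ 1 →
    g (t • x + (1 - t) • y) ≤ (t : EReal) * g x + ((1 - t : ℝ) : EReal) * g y

section Prox

variable {E : Type*} [NormedAddCommGroup E] [InnerProductSpace ℝ E] {g : E → EReal} {γ : ℝ}
  {P : E → E}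

theorem ne_top_of_mem_proxSet (hproper : ∃ x, g x ≠ ⊤) {v w : E} (hw : w ∈ proxSet g γ v) :
    g w ≠ ⊤ := by
  obtain ⟨x, hx⟩ := hproper
  intro htop
  have h := hw x
  rw [htop, EReal.top_add_coe, top_le_iff] at h
  exact EReal.add_ne_top hx (EReal.coe_ne_top _) h

theorem moreauEnv_eq_of_mem_proxSet {v w : E} (hw : w ∈ proxSet g γ v) :
    moreauEnv g γ v = g w + (((1 / (2 * γ)) * ‖w - v‖ ^ 2 : ℝ) : EReal) :=
  le_antisymm (iInf_le _ w) (le_iInf hw)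

theorem toReal_add_le_of_mem_proxSet (hbot : ∀ x, g x ≠ ⊥) {v w z : E}
    (hw : w ∈ proxSet g γ v) (hwtop : g w ≠ ⊤) (hztop : g z ≠ ⊤) :
    (g w).toReal + 1 / (2 * γ) * ‖w - v‖ ^ 2 ≤ (g z).toReal + 1 / (2 * γ) * ‖z - v‖ ^ 2 := by
  have h := hw z
  rwa [← EReal.coe_toReal hwtop (hbot w), ← EReal.coe_toReal hztop (hbot z), ← EReal.coe_add,
    ← EReal.coe_add, EReal.coe_le_coe_iff] at h

theorem moreauEnv_toReal_eq_of_mem_proxSet (hbot : ∀ x, g x ≠ ⊥) {v w : E}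
    (hw : w ∈ proxSet g γ v) (hwtop : g w ≠ ⊤) :
    (moreauEnv g γ v).toReal = (g w).toReal + 1 / (2 * γ) * ‖w - v‖ ^ 2 := by
  rw [moreauEnv_eq_of_mem_proxSet hw,
    EReal.toReal_add hwtop (hbot w) (EReal.coe_ne_top _) (EReal.coe_ne_bot _), EReal.toReal_coe]

theorem moreauEnv_toReal_le (hbot : ∀ x, g x ≠ ⊥) (hproper : ∃ x, g x ≠ ⊤)
    (hP : ∀ v, P v ∈ proxSet g γ v) (v v' : E) :
    (moreauEnv g γ v').toReal ≤ (moreauEnv g γ v).toReal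
      + ⟪(1 / γ) • (v - P v), v' - v⟫ + 1 / (2 * γ) * ‖v' - v‖ ^ 2 := by
  have hfin := fun x => ne_top_of_mem_proxSet hproper (hP x)
  rw [moreauEnv_toReal_eq_of_mem_proxSet hbot (hP v') (hfin v'),
    moreauEnv_toReal_eq_of_mem_proxSet hbot (hP v) (hfin v)]
  have hmin := toReal_add_le_of_mem_proxSet hbot (hP v') (hfin v') (hfin v)
  have hexpand : ‖P v - v'‖ ^ 2 = ‖P v - v‖ ^ 2 + 2 * ⟪v - P v, v' - v⟫ + ‖v' - v‖ ^ 2 := by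
    rw [show P v - v' = (P v - v) - (v' - v) by abel, norm_sub_sq_real, ← neg_sub v (P v),
      inner_neg_left]
    ring
  rw [hexpand] at hmin
  rw [real_inner_smul_left]
  linear_combination hmin

theorem inner_le_of_mem_proxSet (hγ : 0 < γ) (hbot : ∀ x, g x ≠ ⊥)
    (hconv : ConvexEReal g) {v w z : E} (hw : w ∈ proxSet g γ v) (hwtop : g w ≠ ⊤) (hztop : g z ≠ ⊤) :
    ⟪v - w, z - w⟫ ≤ γ * ((g z).toReal - (g w).toReal) := by
  set a := (g w).toReal
  set b := (g z).toReal
  have hga : g w = a := (EReal.coe_toReal hwtop (hbot w)).symm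
  have hgb : g z = b := (EReal.coe_toReal hztop (hbot z)).symm
  -- compare `w` with the point `w + t • (z - w)` of the segment `[w, z]`, then let `t → 0`
  have hstep : ∀ t : ℝ, 0 < t → t ≤ 1 →
      ⟪v - w, z - w⟫ ≤ γ * (b - a) + t / 2 * ‖z - w‖ ^ 2 := by
    intro t ht0 ht1
    have hconvt := hconv z w t ht0.le ht1
    rw [hga, hgb, ← EReal.coe_mul, ← EReal.coe_mul, ← EReal.coe_add] at hconvt
    have hmin := (hw (t • z + (1 - t) • w)).trans (add_le_add_left hconvt _)
    rw [hga, ← EReal.coe_add, ← EReal.coe_add, EReal.coe_le_coe_iff,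
      show t • z + (1 - t) • w - v = (w - v) + t • (z - w) by module, norm_add_sq_real,
      inner_smul_right, norm_smul, Real.norm_eq_abs, abs_of_pos ht0, ← neg_sub v w,
      inner_neg_left] at hmin
    have hγc : 2 * γ * (1 / (2 * γ)) = 1 := by field_simp
    have hscaled := mul_le_mul_of_nonneg_left hmin (by positivity : 0 ≤ 2 * γ)
    refine le_of_mul_le_mul_left ?_ ht0
    linear_combination (1 / 2) * hscaled + (t ^ 2 / 2 * ‖z - w‖ ^ 2 - t * ⟪v - w, z - w⟫) * hγc
  have hlim : Tendsto (fun t : ℝ => γ * (b - a) + t / 2 * ‖z - w‖ ^ 2) (𝓝[>] 0)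
      (𝓝 (γ * (b - a))) := by
    apply tendsto_nhdsWithin_of_tendsto_nhds
    have hcont : Continuous fun t : ℝ => γ * (b - a) + t / 2 * ‖z - w‖ ^ 2 := by fun_prop
    simpa using hcont.tendsto 0
  refine ge_of_tendsto hlim ?_
  filter_upwards [Ioc_mem_nhdsGT one_pos] with t ht
  exact hstep t ht.1 ht.2

theorem prox_norm_sub_sq_le_inner (hγ : 0 < γ) (hbot : ∀ x, g x ≠ ⊥) (hproper : ∃ x, g x ≠ ⊤)
    (hconv : ConvexEReal g)
    (hP : ∀ v, P v ∈ proxSet g γ v) (v w : E) :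
    ‖P v - P w‖ ^ 2 ≤ ⟪v - w, P v - P w⟫ := by
  have hfin := fun x => ne_top_of_mem_proxSet hproper (hP x)
  have hvw := inner_le_of_mem_proxSet hγ hbot hconv (hP v) (hfin v) (hfin w)
  have hwv := inner_le_of_mem_proxSet hγ hbot hconv (hP w) (hfin w) (hfin v)
  have hsum : ⟪v - P v, P w - P v⟫ + ⟪w - P w, P v - P w⟫
      = ‖P v - P w‖ ^ 2 - ⟪v - w, P v - P w⟫ := by
    rw [← real_inner_self_eq_norm_sq]
    simp only [inner_sub_left, inner_sub_right, real_inner_comm]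
    ring
  linarith

theorem prox_lipschitzWith_one (hγ : 0 < γ) (hbot : ∀ x, g x ≠ ⊥) (hproper : ∃ x, g x ≠ ⊤)
    (hconv : ConvexEReal g)
    (hP : ∀ v, P v ∈ proxSet g γ v) : LipschitzWith 1 P := by
  refine LipschitzWith.mk_one fun v w => ?_
  rw [dist_eq_norm, dist_eq_norm]
  have hfirm := prox_norm_sub_sq_le_inner hγ hbot hproper hconv hP v w
  have hcs := real_inner_le_norm (v - w) (P v - P w)
  nlinarith [norm_nonneg (P v - P w), norm_nonneg (v - w)]

theorem hasGradientAt_moreauEnv [CompleteSpace E] (hγ : 0 < γ) (hbot : ∀ x, g x ≠ ⊥)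
    (hproper : ∃ x, g x ≠ ⊤)
    (hconv : ConvexEReal g)
    (hP : ∀ v, P v ∈ proxSet g γ v) (v : E) :
    HasGradientAt (fun x => (moreauEnv g γ x).toReal) ((1 / γ) • (v - P v)) v := by
  have hcont : Continuous fun x => (1 / γ) • (x - P x) :=
    (continuous_id.sub (prox_lipschitzWith_one hγ hbot hproper hconv hP).continuous).const_smul _
  exact hasGradientAt_of_le_quadratic (G := fun x => (1 / γ) • (x - P x))
    (moreauEnv_toReal_le hbot hproper hP) hcont.continuousAt

end Prox

theorem fbe_gradient_formula_general
    {E : Type*} [NormedAddCommGroup E] [InnerProductSpace ℝ E] [FiniteDimensional ℝ E]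
    (l : E → ℝ) (l' : E → E) (g : E → EReal) (L γ : ℝ)
    (hγ : 0 < γ)
    (hgrad : ∀ x : E, HasGradientAt l (l' x) x)
    (hproper : ∃ x : E, g x ≠ ⊤) (hbot : ∀ x : E, g x ≠ ⊥)
    (hconv : ∀ x y : E, ∀ t : ℝ, 0 ≤ t → t ≤ 1 →
      g (t • x + (1 - t) • y) ≤ (t : EReal) * g x + ((1 - t : ℝ) : EReal) * g y)
    (P : E → E)
    (hP : ∀ v : E, P v ∈ proxSet g γ v)
    (u : E) (H : E →L[ℝ] E) (hH : HasFDerivAt l' H u) :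
    HasGradientAt
      (fun x : E => l x - (γ / 2) * ‖l' x‖ ^ 2 + (moreauEnv g γ (x - γ • l' x)).toReal)
      ((ContinuousLinearMap.id ℝ E - γ • H) ((1 / γ) • (u - P (u - γ • l' u)))) u := by
  have hAsymm : ((ContinuousLinearMap.id ℝ E - γ • H : E →L[ℝ] E) : E →ₗ[ℝ] E).IsSymmetric := by
    rw [ContinuousLinearMap.toLinearMap_sub, ContinuousLinearMap.toLinearMap_smul,
      ContinuousLinearMap.coe_id]
    exact LinearMap.IsSymmetric.id.sub
      ((isSymmetric_of_hasFDerivAt_gradient hgrad hH).smul (conj_trivial γ))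
  have hA : HasFDerivAt (fun x => x - γ • l' x) (ContinuousLinearMap.id ℝ E - γ • H) u :=
    (hasFDerivAt_id u).sub (hH.const_smul γ)
  have henv := (hasGradientAt_moreauEnv hγ hbot hproper hconv hP (u - γ • l' u)).comp_hasFDerivAt
    (φ := fun x => x - γ • l' x) hA
  rw [hAsymm.clm_adjoint_eq] at henv
  convert (hasGradientAt_sub_mul_norm_sq_gradient hgrad hH γ).add henv using 1
  rw [← map_add]
  congr 1
  have hcancel : (1 / γ) • γ • l' u = l' u := by
    rw [smul_smul, one_div_mul_cancel hγ.ne', one_smul]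
  simp only [smul_sub, hcancel]
  abel

/-- gradient formula for the forward–backward envelope with a
proper, convex, lower semicontinuous `g`:
`∇φ_γ(u) = (Id − γ∇²ℓ(u)) R_γ(u)`. -/
theorem fbe_gradient_formula
    {E : Type*} [NormedAddCommGroup E] [InnerProductSpace ℝ E] [FiniteDimensional ℝ E]
    (l : E → ℝ) (l' : E → E) (g : E → EReal) (L γ : ℝ)
    (hL : 0 < L) (hγ : 0 < γ)
    (hgrad : ∀ x : E, HasGradientAt l (l' x) x)
    (hlip : ∀ x y : E, ‖l' x - l' y‖ ≤ L * ‖x - y‖)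
    (hproper : ∃ x : E, g x ≠ ⊤) (hbot : ∀ x : E, g x ≠ ⊥)
    (hlsc : LowerSemicontinuous g)
    (hconv : ∀ x y : E, ∀ t : ℝ, 0 ≤ t → t ≤ 1 →
      g (t • x + (1 - t) • y) ≤ (t : EReal) * g x + ((1 - t : ℝ) : EReal) * g y)
    (P : E → E)
    (hP : ∀ v : E, P v ∈ proxSet g γ v)
    (hPuniq : ∀ v w : E, w ∈ proxSet g γ v → w = P v)
    (u : E) (H : E →L[ℝ] E) (hH : HasFDerivAt l' H u) :
    HasGradientAt
      (fun x : E => l x - (γ / 2) * ‖l' x‖ ^ 2 + (moreauEnv g γ (x - γ • l' x)).toReal)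
      ((ContinuousLinearMap.id ℝ E - γ • H) ((1 / γ) • (u - P (u - γ • l' u)))) u :=
  fbe_gradient_formula_general l l' g L γ hγ hgrad hproper hbot hconv P hP u H hH
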